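/- Let M be the skew-symmetric regular (0,1/(n−1))-biangular matrix of order N = n(n−1) constructed from a Hadamard matrix of order n, and define (0,1)-matrices A_0 = I_N, A_1, A_2, A_3, A_4 by M = A_0 + A_1 − A_2 + A_3 − A_4, A_1 + A_2 = (J_{n−1} − I_{n−1}) ⊗ J_n, A_0 + A_3 + A_4 = I_{n−1} ⊗ J_n. Then {A_0, A_1, A_2, A_3, A_4} forms a nonsymmetric commutative association scheme of class 4 with A_1^T = A_2 and A_3, A_4 symmetric. -/

import Mathlib

/-!
Regard `N × N` matrices, `N = (n - 1) n`, as `(n - 1) × (n - 1)` block matrices with `n × n` blocks.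
Then `M = P + S`, where `P` is the block diagonal `diag (C_{ℓ(i,i)})` and `S` the off-diagonal part
of `M`; moreover `A_0 + A_3 + A_4 = I ⊗ J_n` and `∑ A_l = J`. Since `C_k C_m = δ_{km} n C_k`, the
all-ones `C` is orthogonal to the `C_{ℓ(i,j)}`, and `ℓ` is a symmetric Latin square, every product
of two block matrices with blocks `c_{ij} C_{ℓ(i,j)}` is block diagonal. This gives the
multiplication table `P² = n P`, `P S = S P = 0`, `S² = n (P + I ⊗ J_n - n I)`, while `P` and `S`
annihilate `I ⊗ J_n` and `J`. Hence `span {I, I ⊗ J_n, J, P, S} = span {A_l}` is a commutative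
algebra, and its structure constants are natural numbers because the `A_l` are the adjacency
matrices of a partition of all pairs. Transposition fixes `I, I ⊗ J_n, J, P` and negates `S`, so it
swaps `A_1` and `A_2` and fixes `A_3` and `A_4`.
-/

open Matrix Finset

open scoped Pointwise

namespace Submodule

variable {R 𝔄 𝔅 : Type*} [CommSemiring R] [Semiring 𝔄] [Algebra R 𝔄] {s : Set 𝔄} {x y : 𝔄}

theorem mul_mem_of_mul_subset_span (h : s * s ⊆ span R s) (hx : x ∈ span R s)
    (hy : y ∈ span R s) : x * y ∈ span R s :=
  span_le.2 h (span_mul_span R s s ▸ mul_mem_mul hx hy)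

theorem commute_of_mem_span (h : ∀ a ∈ s, ∀ b ∈ s, Commute a b) (hx : x ∈ span R s)
    (hy : y ∈ span R s) : Commute x y :=
  Algebra.commute_of_mem_adjoin_of_forall_mem_commute (Algebra.span_le_adjoin R s hy)
    fun b hb => (Algebra.commute_of_mem_adjoin_of_forall_mem_commute
      (Algebra.span_le_adjoin R s hx) fun a ha => h b hb a ha).symm

variable [Semiring 𝔅] [Algebra R 𝔅]

theorem image_mul_image_subset_span_image (f : 𝔄 →ₐ[R] 𝔅) (h : s * s ⊆ span R s) :
    f '' s * f '' s ⊆ span R (f '' s) := by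
  rw [← Set.image_mul]
  rintro _ ⟨z, hz, rfl⟩
  exact apply_mem_span_image_of_mem_span f.toLinearMap (h hz)

end Submodule

theorem Matrix.sub_hadamard {m n α : Type*} [NonUnitalNonAssocRing α] (A B C : Matrix m n α) :
    (A - B) ⊙ C = A ⊙ C - B ⊙ C := by
  ext i j
  simp [sub_mul]

open Submodule (span)

section RelationMatrix

variable {V ι : Type*} [DecidableEq ι]

def relationMatrix (r : V → V → ι) (l : ι) : Matrix V V ℝ :=
  of fun x y => if r x y = l then 1 else 0

theorem exists_eq_relationMatrix [Fintype ι] {A : ι → Matrix V V ℝ}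
    (h01 : ∀ l x y, A l x y = 0 ∨ A l x y = 1) (hsum : ∑ l, A l = of fun _ _ => 1) :
    ∃ r : V → V → ι, A = relationMatrix r := by
  have hsum' (x y : V) : ∑ l, A l x y = 1 := by
    simpa [Matrix.sum_apply] using congrFun₂ hsum x y
  have hex (x y : V) : ∃ l, A l x y = 1 := by
    by_contra! h
    have := hsum' x y
    rw [sum_eq_zero fun l _ => (h01 l x y).resolve_right (h l)] at this
    exact zero_ne_one this
  choose r hr using hex
  refine ⟨r, funext fun l => ?_⟩
  ext x y
  rw [relationMatrix, of_apply]
  split_ifs with h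
  · exact h ▸ hr x y
  refine (h01 l x y).resolve_right fun hl => ?_
  have := sum_le_sum_of_subset_of_nonneg (subset_univ {r x y, l})
    fun m _ _ => (h01 m x y).elim (·.ge) (fun h => h ▸ zero_le_one)
  rw [sum_pair h, hr, hl, hsum'] at this
  norm_num at this

theorem relationMatrix_hadamard (r : V → V → ι) (l m : ι) :
    relationMatrix r l ⊙ relationMatrix r m = if l = m then relationMatrix r l else 0 := by
  ext x y
  split_ifs with h <;> by_cases hl : r x y = l <;> simp [relationMatrix, h, hl]

theorem relationMatrix_hadamard_fin_five (r : V → V → Fin 5) :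
    (relationMatrix r 0 + relationMatrix r 1 - relationMatrix r 2 + relationMatrix r 3 -
        relationMatrix r 4) ⊙ (relationMatrix r 0 + relationMatrix r 3 + relationMatrix r 4) =
      relationMatrix r 0 + relationMatrix r 3 - relationMatrix r 4 := by
  simp only [hadamard_add, add_hadamard, Matrix.sub_hadamard, relationMatrix_hadamard,
    Fin.reduceEq, ↓reduceIte, add_zero, zero_add, sub_zero, zero_sub, sub_self]
  abel

theorem sum_smul_relationMatrix_apply [Fintype ι] (r : V → V → ι) (c : ι → ℝ) (x y : V) :
    (∑ l, c l • relationMatrix r l) x y = c (r x y) := by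
  simp [Matrix.sum_apply, relationMatrix]

theorem relationMatrix_mul_apply [Fintype V] (r : V → V → ι) (i j : ι) (x y : V) :
    (relationMatrix r i * relationMatrix r j) x y = #{z | r x z = i ∧ r z y = j} := by
  simp [mul_apply, relationMatrix, ← ite_and, sum_boole, and_comm]

theorem exists_natCoeffs_of_mul_mem_span [Fintype V] [Fintype ι] {r : V → V → ι} {i j : ι}
    (h : relationMatrix r i * relationMatrix r j ∈ span ℝ (Set.range (relationMatrix r))) :
    ∃ p : ι → ℕ, relationMatrix r i * relationMatrix r j = ∑ l, (p l : ℝ) • relationMatrix r l := by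
  obtain ⟨c, hc⟩ := (Submodule.mem_span_range_iff_exists_fun ℝ).1 h
  -- On a pair of class `l` the product has entry `c l`, which counts paths, so `c l = ⌊c l⌋₊`.
  refine ⟨fun l => ⌊c l⌋₊, ?_⟩
  ext x y
  have hcount := relationMatrix_mul_apply r i j x y
  rw [← hc, sum_smul_relationMatrix_apply] at hcount
  simp only [← hc, sum_smul_relationMatrix_apply, hcount, Nat.floor_natCast]

theorem exists_natCoeffs_and_commute_of_span_eq [Fintype V] [DecidableEq V] [Fintype ι]
    {r : V → V → ι} {s : Set (Matrix V V ℝ)}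
    (hspan : span ℝ (Set.range (relationMatrix r)) = span ℝ s)
    (hmul : s * s ⊆ span ℝ s) (hcomm : ∀ a ∈ s, ∀ b ∈ s, Commute a b) :
    (∀ i j, ∃ p : ι → ℕ, relationMatrix r i * relationMatrix r j =
      ∑ l, (p l : ℝ) • relationMatrix r l) ∧
    ∀ i j, Commute (relationMatrix r i) (relationMatrix r j) := by
  have hmem (l : ι) : relationMatrix r l ∈ span ℝ s := by
    rw [← hspan]
    exact Submodule.subset_span ⟨l, rfl⟩
  refine ⟨fun i j => exists_natCoeffs_of_mul_mem_span ?_,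
    fun i j => Submodule.commute_of_mem_span hcomm (hmem i) (hmem j)⟩
  rw [hspan]
  exact Submodule.mul_mem_of_mul_subset_span hmul (hmem i) (hmem j)

end RelationMatrix

section Blocks

variable {ι κ τ : Type*}

def allOnes (κ : Type*) : Matrix κ κ ℝ := of fun _ _ => 1

theorem allOnes_mul_allOnes [Fintype κ] :
    allOnes κ * allOnes κ = (Fintype.card κ : ℝ) • allOnes κ := by
  ext; simp [allOnes, mul_apply]

def constBlock (κ : Type*) (c : Matrix ι ι ℝ) : Matrix ι ι (Matrix κ κ ℝ) :=
  of fun i j => c i j • allOnes κ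

def latinBlock (C : τ → Matrix κ κ ℝ) (ℓ : ι → ι → τ) (c : Matrix ι ι ℝ) :
    Matrix ι ι (Matrix κ κ ℝ) :=
  of fun i j => c i j • C (ℓ i j)

theorem constBlock_one [DecidableEq ι] :
    constBlock κ (1 : Matrix ι ι ℝ) = diagonal fun _ => allOnes κ := by
  ext i j : 1
  by_cases h : i = j <;> simp [constBlock, one_apply, h]

theorem constBlock_smul (a : ℝ) (c : Matrix ι ι ℝ) :
    constBlock κ (a • c) = a • constBlock κ c := by
  ext i j : 1
  simp [constBlock, smul_smul]

theorem constBlock_mul_constBlock [Fintype ι] [Fintype κ] (c d : Matrix ι ι ℝ) :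
    constBlock κ c * constBlock κ d = (Fintype.card κ : ℝ) • constBlock κ (c * d) := by
  ext i j : 1
  simp only [constBlock, mul_apply, of_apply, smul_mul_smul_comm, allOnes_mul_allOnes, smul_smul,
    Matrix.smul_apply, ← sum_smul, mul_sum, mul_comm]

variable {C : τ → Matrix κ κ ℝ} {ℓ : ι → ι → τ}

theorem latinBlock_one [DecidableEq ι] : latinBlock C ℓ 1 = diagonal fun i => C (ℓ i i) := by
  ext i j : 1
  by_cases h : i = j <;> simp [latinBlock, one_apply, h]

theorem latinBlock_sub (c d : Matrix ι ι ℝ) :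
    latinBlock C ℓ (c - d) = latinBlock C ℓ c - latinBlock C ℓ d := by
  ext i j : 1
  simp [latinBlock, sub_smul]

theorem latinBlock_neg (c : Matrix ι ι ℝ) : latinBlock C ℓ (-c) = -latinBlock C ℓ c := by
  ext i j : 1
  simp [latinBlock]

theorem latinBlock_mul_constBlock [Fintype ι] [Fintype κ]
    (h : ∀ i j, C (ℓ i j) * allOnes κ = 0) (c d : Matrix ι ι ℝ) :
    latinBlock C ℓ c * constBlock κ d = 0 := by
  ext i j : 1
  simp [latinBlock, constBlock, mul_apply, smul_mul_smul_comm, h]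

theorem constBlock_mul_latinBlock [Fintype ι] [Fintype κ]
    (h : ∀ i j, allOnes κ * C (ℓ i j) = 0) (c d : Matrix ι ι ℝ) :
    constBlock κ d * latinBlock C ℓ c = 0 := by
  ext i j : 1
  simp [latinBlock, constBlock, mul_apply, smul_mul_smul_comm, h]

theorem latinBlock_mul_latinBlock [Fintype ι] [DecidableEq ι] [Fintype κ] {N : ℝ}
    (hsq : ∀ t, C t * C t = N • C t) (horth : ∀ s t, s ≠ t → C s * C t = 0)
    (hℓsymm : ∀ i j, ℓ i j = ℓ j i) (hℓlatin : ∀ i, Function.Injective (ℓ i))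
    (c d : Matrix ι ι ℝ) :
    latinBlock C ℓ c * latinBlock C ℓ d =
      N • diagonal fun i => ∑ k, (c i k * d k i) • C (ℓ i k) := by
  ext i j : 1
  simp only [mul_apply, latinBlock, of_apply, smul_mul_smul_comm, Matrix.smul_apply,
    diagonal_apply]
  split_ifs with h
  · subst h
    simp [hℓsymm _ i, hsq, smul_sum, smul_smul, mul_comm]
  · -- `ℓ i k = ℓ k i ≠ ℓ k j` since `ℓ k` is injective
    rw [smul_zero]
    refine sum_eq_zero fun k _ => ?_
    rw [hℓsymm i k, horth _ _ fun h' => h (hℓlatin k h'), smul_zero]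

end Blocks

def skewSign (ι : Type*) [LinearOrder ι] : Matrix ι ι ℝ :=
  of fun i j => if i < j then 1 else if j < i then -1 else 0

section SkewSign

variable {ι : Type*} [LinearOrder ι]

@[simp]
theorem skewSign_self (i : ι) : skewSign ι i i = 0 := by
  simp [skewSign]

theorem one_add_skewSign_apply (i j : ι) :
    (1 + skewSign ι) i j = if i ≤ j then 1 else -1 := by
  rcases lt_trichotomy i j with h | rfl | h
  · simp [skewSign, one_apply, h, h.le, h.ne]
  · simp [skewSign]
  · simp [skewSign, one_apply, h, h.not_ge, h.not_gt, h.ne']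

theorem one_add_skewSign_hadamard_one : (1 + skewSign ι) ⊙ 1 = 1 := by
  ext i j
  by_cases h : i = j <;> simp [skewSign, one_apply, h]

theorem transpose_skewSign : (skewSign ι)ᵀ = -skewSign ι := by
  ext i j
  rcases lt_trichotomy i j with h | rfl | h
  · simp [skewSign, h, h.not_gt]
  · simp [skewSign]
  · simp [skewSign, h, h.not_gt]

theorem skewSign_mul_swap (i k : ι) :
    skewSign ι i k * skewSign ι k i = (1 : Matrix ι ι ℝ) i k - 1 := by
  rcases lt_trichotomy i k with h | rfl | h
  · simp [skewSign, one_apply, h, h.not_gt, h.ne]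
  · simp [skewSign]
  · simp [skewSign, one_apply, h, h.not_gt, h.ne']

end SkewSign

theorem sum_comp_eq_sum_sub {ι τ M : Type*} [Fintype ι] [Fintype τ] [DecidableEq τ]
    [AddCommGroup M] {f : ι → τ} (hf : Function.Injective f) {t₀ : τ} (hf₀ : ∀ k, f k ≠ t₀)
    (hcard : Fintype.card ι + 1 = Fintype.card τ) (g : τ → M) :
    ∑ k, g (f k) = ∑ t, g t - g t₀ := by
  have himage : univ.image f = univ.erase t₀ := by
    refine eq_of_subset_of_card_le (fun t ht => ?_) ?_
    · obtain ⟨k, -, rfl⟩ := mem_image.1 ht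
      exact mem_erase.2 ⟨hf₀ k, mem_univ _⟩
    · rw [card_erase_of_mem (mem_univ _), card_image_of_injective _ hf, card_univ, card_univ]
      omega
  rw [← sum_image fun a _ b _ h => hf h, himage, sum_erase_eq_sub (mem_univ _)]

section Table

variable {ι κ τ : Type*} [Fintype ι] [LinearOrder ι] [Fintype κ] {C : τ → Matrix κ κ ℝ}
  {ℓ : ι → ι → τ} {N : ℝ}

theorem latinBlock_one_mul_self (hsq : ∀ t, C t * C t = N • C t)
    (horth : ∀ s t, s ≠ t → C s * C t = 0) (hℓsymm : ∀ i j, ℓ i j = ℓ j i)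
    (hℓlatin : ∀ i, Function.Injective (ℓ i)) :
    latinBlock C ℓ 1 * latinBlock C ℓ 1 = N • latinBlock C ℓ 1 := by
  rw [latinBlock_mul_latinBlock hsq horth hℓsymm hℓlatin, latinBlock_one]
  simp [one_apply]

theorem latinBlock_one_mul_latinBlock_skewSign (hsq : ∀ t, C t * C t = N • C t)
    (horth : ∀ s t, s ≠ t → C s * C t = 0) (hℓsymm : ∀ i j, ℓ i j = ℓ j i)
    (hℓlatin : ∀ i, Function.Injective (ℓ i)) :
    latinBlock C ℓ 1 * latinBlock C ℓ (skewSign ι) = 0 := by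
  rw [latinBlock_mul_latinBlock hsq horth hℓsymm hℓlatin]
  simp [one_apply]

theorem latinBlock_skewSign_mul_latinBlock_one (hsq : ∀ t, C t * C t = N • C t)
    (horth : ∀ s t, s ≠ t → C s * C t = 0) (hℓsymm : ∀ i j, ℓ i j = ℓ j i)
    (hℓlatin : ∀ i, Function.Injective (ℓ i)) :
    latinBlock C ℓ (skewSign ι) * latinBlock C ℓ 1 = 0 := by
  rw [latinBlock_mul_latinBlock hsq horth hℓsymm hℓlatin]
  simp [one_apply]

theorem latinBlock_skewSign_mul_self [DecidableEq κ] [Fintype τ] [DecidableEq τ] {t₀ : τ}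
    (hC₀ : C t₀ = allOnes κ) (hsq : ∀ t, C t * C t = N • C t)
    (horth : ∀ s t, s ≠ t → C s * C t = 0) (hsum : ∑ t, C t = N • 1)
    (hℓsymm : ∀ i j, ℓ i j = ℓ j i) (hℓlatin : ∀ i, Function.Injective (ℓ i))
    (hℓ₀ : ∀ i j, ℓ i j ≠ t₀) (hcard : Fintype.card ι + 1 = Fintype.card τ) :
    latinBlock C ℓ (skewSign ι) * latinBlock C ℓ (skewSign ι) =
      N • (latinBlock C ℓ 1 + constBlock κ 1 - N • 1) := by
  have hrow (i : ι) : ∑ k, C (ℓ i k) = N • 1 - allOnes κ := by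
    rw [sum_comp_eq_sum_sub (hℓlatin i) (hℓ₀ i) hcard, hsum, hC₀]
  have hscalar : (N • 1 : Matrix ι ι (Matrix κ κ ℝ)) = diagonal fun _ => N • 1 := by
    rw [← diagonal_one, ← diagonal_smul]; rfl
  rw [latinBlock_mul_latinBlock hsq horth hℓsymm hℓlatin, latinBlock_one, constBlock_one, hscalar,
    diagonal_add, diagonal_sub]
  congr 2
  funext i
  simp only [skewSign_mul_swap, sub_smul, one_smul, sum_sub_distrib, hrow, one_apply, ite_smul,
    zero_smul, sum_ite_eq, mem_univ, if_true]
  abel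

end Table

section Generators

variable {ι κ τ : Type*} [Fintype ι] [LinearOrder ι] [Fintype κ] [DecidableEq κ]

/-- In block form: `I`, `I ⊗ J`, the all-ones matrix, the diagonal blocks `P` and the off-diagonal
part `S` of `M`. -/
def blockGens (κ : Type*) [DecidableEq κ] (C : τ → Matrix κ κ ℝ) (ℓ : ι → ι → τ) :
    Set (Matrix ι ι (Matrix κ κ ℝ)) :=
  {1, constBlock κ 1, constBlock κ (allOnes ι), latinBlock C ℓ 1, latinBlock C ℓ (skewSign ι)}

theorem blockGens_mul_subset_span_and_commute [Fintype τ] [DecidableEq τ] {C : τ → Matrix κ κ ℝ}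
    {ℓ : ι → ι → τ} {N : ℝ} {t₀ : τ} (hC₀ : C t₀ = allOnes κ)
    (hsq : ∀ t, C t * C t = N • C t) (horth : ∀ s t, s ≠ t → C s * C t = 0)
    (hsum : ∑ t, C t = N • 1) (hℓsymm : ∀ i j, ℓ i j = ℓ j i)
    (hℓlatin : ∀ i, Function.Injective (ℓ i)) (hℓ₀ : ∀ i j, ℓ i j ≠ t₀)
    (hcard : Fintype.card ι + 1 = Fintype.card τ) :
    blockGens κ C ℓ * blockGens κ C ℓ ⊆ span ℝ (blockGens κ C ℓ) ∧
      ∀ a ∈ blockGens κ C ℓ, ∀ b ∈ blockGens κ C ℓ, Commute a b := by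
  have hCJ (i j : ι) : C (ℓ i j) * allOnes κ = 0 := by rw [← hC₀]; exact horth _ _ (hℓ₀ i j)
  have hJC (i j : ι) : allOnes κ * C (ℓ i j) = 0 := by rw [← hC₀]; exact horth _ _ (hℓ₀ i j).symm
  suffices ∀ a ∈ blockGens κ C ℓ, ∀ b ∈ blockGens κ C ℓ,
      a * b ∈ span ℝ (blockGens κ C ℓ) ∧ Commute a b from
    ⟨Set.mul_subset_iff.2 fun a ha b hb => (this a ha b hb).1,
      fun a ha b hb => (this a ha b hb).2⟩
  simp only [blockGens, Set.mem_insert_iff, Set.mem_singleton_iff]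
  rintro a (rfl | rfl | rfl | rfl | rfl) b (rfl | rfl | rfl | rfl | rfl) <;>
    simp only [commute_iff_eq, one_mul, mul_one, constBlock_mul_constBlock, allOnes_mul_allOnes,
      constBlock_smul, latinBlock_mul_constBlock hCJ, constBlock_mul_latinBlock hJC,
      latinBlock_one_mul_self hsq horth hℓsymm hℓlatin,
      latinBlock_one_mul_latinBlock_skewSign hsq horth hℓsymm hℓlatin,
      latinBlock_skewSign_mul_latinBlock_one hsq horth hℓsymm hℓlatin,
      latinBlock_skewSign_mul_self hC₀ hsq horth hsum hℓsymm hℓlatin hℓ₀ hcard, and_true] <;>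
    repeat' (first
      | exact Submodule.zero_mem _
      | (apply Submodule.subset_span; simp; done)
      | refine Submodule.smul_mem _ _ ?_
      | refine Submodule.sub_mem _ ?_ ?_
      | refine Submodule.add_mem _ ?_ ?_)

end Generators

section Comp

variable {ι κ τ : Type*} [Fintype ι] [DecidableEq ι] [Fintype κ] [DecidableEq κ]
  {C : τ → Matrix κ κ ℝ} {ℓ : ι → ι → τ}

theorem compAlgEquiv_constBlock_one :
    compAlgEquiv ι κ ℝ ℝ (constBlock κ 1) = of fun x y => if x.1 = y.1 then 1 else 0 := by
  ext x y
  by_cases h : x.1 = y.1 <;> simp [constBlock, allOnes, one_apply, h]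

theorem compAlgEquiv_constBlock_allOnes :
    compAlgEquiv ι κ ℝ ℝ (constBlock κ (allOnes ι)) = of fun _ _ => 1 := by
  ext x y
  simp [constBlock, allOnes]

theorem compAlgEquiv_latinBlock_hadamard (c d : Matrix ι ι ℝ) :
    compAlgEquiv ι κ ℝ ℝ (latinBlock C ℓ c) ⊙ compAlgEquiv ι κ ℝ ℝ (constBlock κ d) =
      compAlgEquiv ι κ ℝ ℝ (latinBlock C ℓ (c ⊙ d)) := by
  ext x y
  simp only [latinBlock, compAlgEquiv_apply, constBlock, allOnes, smul_of, hadamard_apply,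
    comp_apply, of_apply, Matrix.smul_apply, smul_eq_mul, Pi.smul_apply, mul_one]
  ring

theorem transpose_compAlgEquiv_constBlock (c : Matrix ι ι ℝ) :
    (compAlgEquiv ι κ ℝ ℝ (constBlock κ c))ᵀ = compAlgEquiv ι κ ℝ ℝ (constBlock κ cᵀ) := by
  ext x y
  simp [constBlock, allOnes]

theorem transpose_compAlgEquiv_latinBlock (hC : ∀ t, (C t)ᵀ = C t)
    (hℓ : ∀ i j, ℓ i j = ℓ j i) (c : Matrix ι ι ℝ) :
    (compAlgEquiv ι κ ℝ ℝ (latinBlock C ℓ c))ᵀ = compAlgEquiv ι κ ℝ ℝ (latinBlock C ℓ cᵀ) := by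
  ext ⟨i, a⟩ ⟨j, b⟩
  simp only [transpose_apply, compAlgEquiv_apply, comp_apply, latinBlock, of_apply,
    Matrix.smul_apply, smul_eq_mul]
  rw [hℓ j i, ← congrFun₂ (hC (ℓ i j)) a b, transpose_apply]

end Comp

theorem eq_compAlgEquiv_latinBlock {ι κ τ : Type*} [Fintype ι] [LinearOrder ι] [Fintype κ]
    [DecidableEq κ] {C : τ → Matrix κ κ ℝ} {ℓ : ι → ι → τ} {M : Matrix (ι × κ) (ι × κ) ℝ}
    (hM : ∀ i j a b, M (i, a) (j, b) = if i ≤ j then C (ℓ i j) a b else -C (ℓ i j) a b) :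
    M = compAlgEquiv ι κ ℝ ℝ (latinBlock C ℓ (1 + skewSign ι)) := by
  ext ⟨i, a⟩ ⟨j, b⟩
  simp only [hM, compAlgEquiv_apply, comp_apply, latinBlock, of_apply, one_add_skewSign_apply,
    ite_smul, one_smul, neg_smul]
  split_ifs <;> rfl

section Relations

variable {K W : Type*} [Field K] [CharZero K] [AddCommGroup W] [Module K W] {A : Fin 5 → W}
  {I D J P S : W}

theorem eq_of_relations (hI : A 0 = I) (hD : A 0 + A 3 + A 4 = D) (hJ : ∑ l, A l = J)
    (hP : A 0 + A 3 - A 4 = P) (hS : A 1 - A 2 = S) :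
    A 1 = (2 : K)⁻¹ • (J - D + S) ∧ A 2 = (2 : K)⁻¹ • (J - D - S) ∧
      A 3 = (2 : K)⁻¹ • (D + P) - I ∧ A 4 = (2 : K)⁻¹ • (D - P) := by
  subst hI hD hJ hP hS
  simp only [Fin.sum_univ_five]
  refine ⟨?_, ?_, ?_, ?_⟩ <;> module

theorem span_range_eq_of_relations (hI : A 0 = I) (hD : A 0 + A 3 + A 4 = D)
    (hJ : ∑ l, A l = J) (hP : A 0 + A 3 - A 4 = P) (hS : A 1 - A 2 = S) :
    span K (Set.range A) = span K {I, D, J, P, S} := by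
  obtain ⟨h1, h2, h3, h4⟩ := eq_of_relations (K := K) hI hD hJ hP hS
  apply le_antisymm <;> rw [Submodule.span_le]
  · rintro _ ⟨l, rfl⟩
    fin_cases l <;> simp only [Fin.reduceFinMk, Fin.zero_eta, Fin.mk_one, hI, h1, h2, h3, h4] <;>
      repeat' (first
        | (apply Submodule.subset_span; simp; done)
        | refine Submodule.smul_mem _ _ ?_
        | refine Submodule.sub_mem _ ?_ ?_
        | refine Submodule.add_mem _ ?_ ?_)
  · have hA (l : Fin 5) : A l ∈ span K (Set.range A) := Submodule.subset_span ⟨l, rfl⟩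
    simp only [Set.insert_subset_iff, Set.singleton_subset_iff, SetLike.mem_coe]
    exact ⟨hI ▸ hA 0, hD ▸ add_mem (add_mem (hA 0) (hA 3)) (hA 4), hJ ▸ sum_mem fun l _ => hA l,
      hP ▸ sub_mem (add_mem (hA 0) (hA 3)) (hA 4), hS ▸ sub_mem (hA 1) (hA 2)⟩

theorem transpose_of_relations {m : Type*} [DecidableEq m] {A : Fin 5 → Matrix m m ℝ}
    {D J P S : Matrix m m ℝ} (hI : A 0 = 1) (hD : A 0 + A 3 + A 4 = D) (hJ : ∑ l, A l = J)
    (hP : A 0 + A 3 - A 4 = P) (hS : A 1 - A 2 = S) (hDt : Dᵀ = D) (hJt : Jᵀ = J) (hPt : Pᵀ = P)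
    (hSt : Sᵀ = -S) :
    (A 1)ᵀ = A 2 ∧ (A 3)ᵀ = A 3 ∧ (A 4)ᵀ = A 4 := by
  obtain ⟨h1, h2, h3, h4⟩ := eq_of_relations (K := ℝ) hI hD hJ hP hS
  refine ⟨?_, ?_, ?_⟩ <;>
    simp only [h1, h2, h3, h4, transpose_smul, transpose_add, transpose_sub, transpose_one, hDt,
      hJt, hPt, hSt]
  module

end Relations

/-- The decomposition of the skew-symmetric regular biangular matrix `M` (built
from the outer products `C_i` of a normalized Hadamard matrix of order `n` and a
symmetric Latin square on `{2,…,n}`) into `(0,1)`-matrices `A_0 = I, A_1, …, A_4`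
via `M = A_0 + A_1 - A_2 + A_3 - A_4`, `A_1 + A_2 = (J_{n-1} - I_{n-1}) ⊗ J_n`,
`A_0 + A_3 + A_4 = I_{n-1} ⊗ J_n` yields a nonsymmetric commutative association
scheme of class 4: the matrices sum to `J`, satisfy `A_1ᵀ = A_2` with `A_3, A_4`
symmetric, and their products are nonnegative integer combinations of the `A_l`
and commute. -/
theorem nonsymmetric_association_scheme_from_biangular (n : ℕ) (hn : 2 ≤ n)
    (C : Fin n → Matrix (Fin n) (Fin n) ℝ)
    (hsymm : ∀ i, (C i)ᵀ = C i)
    (hC1 : C ⟨0, by omega⟩ = (Matrix.of fun _ _ => (1 : ℝ)))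
    (horth : ∀ i j, i ≠ j → C i * C j = 0)
    (hsq : ∀ i, C i * C i = (n : ℝ) • C i)
    (hsumC : (∑ i, C i) = (n : ℝ) • 1)
    (ℓ : Fin (n - 1) → Fin (n - 1) → Fin n)
    (hℓsymm : ∀ i j, ℓ i j = ℓ j i)
    (hℓlatin : ∀ i, Function.Injective (ℓ i))
    (hℓ0 : ∀ i j, ℓ i j ≠ ⟨0, by omega⟩)
    (M : Matrix (Fin (n - 1) × Fin n) (Fin (n - 1) × Fin n) ℝ)
    (hM : ∀ (i j : Fin (n - 1)) (a b : Fin n),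
      M (i, a) (j, b) = if i ≤ j then C (ℓ i j) a b else -C (ℓ i j) a b)
    (A : Fin 5 → Matrix (Fin (n - 1) × Fin n) (Fin (n - 1) × Fin n) ℝ)
    (hA0 : A 0 = 1)
    (h01 : ∀ i x y, A i x y = 0 ∨ A i x y = 1)
    (hdecomp : M = A 0 + A 1 - A 2 + A 3 - A 4)
    (h12 : A 1 + A 2 = Matrix.of (fun x y : Fin (n - 1) × Fin n =>
      if x.1 ≠ y.1 then (1 : ℝ) else 0))
    (h034 : A 0 + A 3 + A 4 = Matrix.of (fun x y : Fin (n - 1) × Fin n =>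
      if x.1 = y.1 then (1 : ℝ) else 0)) :
    ((∑ i, A i) = (Matrix.of fun _ _ => (1 : ℝ))) ∧
    ((A 1)ᵀ = A 2) ∧ ((A 3)ᵀ = A 3) ∧ ((A 4)ᵀ = A 4) ∧
    (∀ i j, ∃ p : Fin 5 → ℕ, A i * A j = ∑ l, (p l : ℝ) • A l) ∧
    (∀ i j, A i * A j = A j * A i) := by
  set e := compAlgEquiv (Fin (n - 1)) (Fin n) ℝ ℝ
  have hsum : ∑ l, A l = of fun _ _ => 1 := by
    rw [Fin.sum_univ_five, show A 0 + A 1 + A 2 + A 3 + A 4 = A 1 + A 2 + (A 0 + A 3 + A 4) by abel,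
      h12, h034]
    ext x y
    by_cases h : x.1 = y.1 <;> simp [h]
  obtain ⟨r, hr⟩ := exists_eq_relationMatrix h01 hsum
  have hD : A 0 + A 3 + A 4 = e (constBlock (Fin n) 1) :=
    h034.trans compAlgEquiv_constBlock_one.symm
  have hJ : ∑ l, A l = e (constBlock (Fin n) (allOnes _)) :=
    hsum.trans compAlgEquiv_constBlock_allOnes.symm
  have hMe := eq_compAlgEquiv_latinBlock hM
  -- masking `M` with `I ⊗ J_n` keeps exactly its diagonal blocks
  have hP : A 0 + A 3 - A 4 = e (latinBlock C ℓ 1) := by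
    rw [← one_add_skewSign_hadamard_one, ← compAlgEquiv_latinBlock_hadamard, ← hMe, ← hD, hdecomp,
      hr, relationMatrix_hadamard_fin_five]
  have hS : A 1 - A 2 = e (latinBlock C ℓ (skewSign _)) := by
    rw [← add_sub_cancel_left 1 (skewSign _), latinBlock_sub, map_sub, ← hMe, ← hP, hdecomp]
    abel
  obtain ⟨ht1, ht3, ht4⟩ := transpose_of_relations hA0 hD hJ hP hS
    (by rw [transpose_compAlgEquiv_constBlock, transpose_one])
    (by rw [transpose_compAlgEquiv_constBlock]; rfl)
    (by rw [transpose_compAlgEquiv_latinBlock hsymm hℓsymm, transpose_one])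
    (by rw [transpose_compAlgEquiv_latinBlock hsymm hℓsymm, transpose_skewSign, latinBlock_neg,
      map_neg])
  have hspan : span ℝ (Set.range A) = span ℝ (e '' blockGens (Fin n) C ℓ) := by
    rw [span_range_eq_of_relations hA0 hD hJ hP hS]
    simp [blockGens, Set.image_insert_eq]
  obtain ⟨hmul, hcomm⟩ := blockGens_mul_subset_span_and_commute hC1 hsq horth hsumC hℓsymm
    hℓlatin hℓ0 (by simp; omega)
  subst hr
  obtain ⟨hcoeff, hcomm'⟩ := exists_natCoeffs_and_commute_of_span_eq hspan
    (Submodule.image_mul_image_subset_span_image e.toAlgHom hmul)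
    (by rintro _ ⟨a, ha, rfl⟩ _ ⟨b, hb, rfl⟩; exact (hcomm a ha b hb).map e)
  exact ⟨hsum, ht1, ht3, ht4, hcoeff, hcomm'⟩
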